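/- arXiv:0802.2111 — 3 statements merged into one kernel-verified Lean document; each statement's English description precedes it below -/
import Mathlib

section
/- Let p > 2 and set α = 1 − 2/p ∈ (0, 1). Let C₅ > 0 and let Φ : ℂ × ℂ → ℂ be measurable with |Φ(c, w)| ≤ C₅ for all (c, w) and Φ(c, w) = 0 whenever |c| ≥ 1. Then there exists a constant H > 0 depending only on C₅ and p (and not on f) such that for every bounded continuous f : ℂ → ℂ and all c, c′ ∈ ℂ, |𝒦f(c) − 𝒦f(c′)| ≤ H |c − c′|^{α}. -/
/-!
Put `g ζ = Φ ζ (f ζ)`: it is bounded by `C₅` and vanishes off the unit disc, and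
`𝒦f(c) - 𝒦f(c')` is `-(1/π) ∫ g ζ ((ζ - c)⁻¹ - (ζ - c')⁻¹)`. Since
`|c - c'| ≤ |ζ - c| + |ζ - c'|`, the kernel difference `|c - c'| / (|ζ - c| |ζ - c'|)` is at most
`2 |c - c'|^α (|ζ - c|^(-(1+α)) + |ζ - c'|^(-(1+α)))`. As `1 + α < 2`, the kernel
`|x|^(-(1+α))` is integrable near `0` in the plane, and its translates have integral over the unit
disc at most `π` more than the centred one, which gives a Hölder constant independent of `c, c'`.
-/

open MeasureTheory

/-- The operator `𝒦`:
`𝒦 f (c) = -(1/π) ∬_ℂ Φ(ζ, f(ζ))/(ζ - c) dξ dη`. -/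
noncomputable def KOp (Φ : ℂ → ℂ → ℂ) (f : ℂ → ℂ) (c : ℂ) : ℂ :=
  -(Real.pi)⁻¹ • ∫ ζ : ℂ, Φ ζ (f ζ) / (ζ - c)

open Metric Set Module

lemma div_mul_le_two_mul_rpow_of_le {α δ r t : ℝ} (hα0 : 0 ≤ α) (hα1 : α ≤ 1) (hδ : 0 ≤ δ)
    (hr : 0 < r) (hrt : r ≤ t) (hδt : δ ≤ 2 * t) :
    δ / (r * t) ≤ 2 * δ ^ α * r ^ (-(1 + α)) := by
  have ht : 0 < t := hr.trans_le hrt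
  have hδ_pow : δ ^ (1 - α) ≤ 2 * t ^ (1 - α) := calc
    δ ^ (1 - α) ≤ (2 * t) ^ (1 - α) := Real.rpow_le_rpow hδ hδt (by linarith)
    _ = 2 ^ (1 - α) * t ^ (1 - α) := Real.mul_rpow zero_le_two ht.le
    _ ≤ 2 ^ (1 : ℝ) * t ^ (1 - α) := by
      gcongr
      · norm_num
      · linarith
    _ = 2 * t ^ (1 - α) := by rw [Real.rpow_one]
  have ht_pow : t ^ (-α) ≤ r ^ (-α) := Real.rpow_le_rpow_of_nonpos hr hrt (by linarith)
  calc δ / (r * t) = δ ^ α * δ ^ (1 - α) * r ^ (-1 : ℝ) * t ^ (-1 : ℝ) := by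
        rw [← Real.rpow_add' hδ (by norm_num), add_sub_cancel, Real.rpow_one,
          Real.rpow_neg_one, Real.rpow_neg_one, div_eq_mul_inv, mul_inv]
        ring
    _ ≤ δ ^ α * (2 * t ^ (1 - α)) * r ^ (-1 : ℝ) * t ^ (-1 : ℝ) := by gcongr
    _ = 2 * δ ^ α * t ^ (-α) * r ^ (-1 : ℝ) := by
        rw [show -α = (1 - α) + -1 by ring, Real.rpow_add ht]
        ring
    _ ≤ 2 * δ ^ α * r ^ (-α) * r ^ (-1 : ℝ) := by gcongr
    _ = 2 * δ ^ α * r ^ (-(1 + α)) := by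
        rw [mul_assoc, ← Real.rpow_add hr, neg_add, add_comm]

lemma div_mul_le_two_mul_rpow_mul_add {α δ r t : ℝ} (hα0 : 0 ≤ α) (hα1 : α ≤ 1) (hδ : 0 ≤ δ)
    (hr : 0 < r) (ht : 0 < t) (hδrt : δ ≤ r + t) :
    δ / (r * t) ≤ 2 * δ ^ α * (r ^ (-(1 + α)) + t ^ (-(1 + α))) := by
  rcases le_total r t with hrt | htr
  · calc δ / (r * t) ≤ 2 * δ ^ α * r ^ (-(1 + α)) :=
          div_mul_le_two_mul_rpow_of_le hα0 hα1 hδ hr hrt (by linarith)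
      _ ≤ _ := by gcongr; exact le_add_of_nonneg_right (by positivity)
  · calc δ / (r * t) = δ / (t * r) := by rw [mul_comm]
      _ ≤ 2 * δ ^ α * t ^ (-(1 + α)) :=
          div_mul_le_two_mul_rpow_of_le hα0 hα1 hδ ht htr (by linarith)
      _ ≤ _ := by gcongr; exact le_add_of_nonneg_left (by positivity)

lemma norm_inv_sub_inv_le {𝕜 : Type*} [NormedDivisionRing 𝕜] {α : ℝ} (hα0 : 0 ≤ α) (hα1 : α ≤ 1)
    {z w : 𝕜} (hz : z ≠ 0) (hw : w ≠ 0) :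
    ‖z⁻¹ - w⁻¹‖ ≤ 2 * ‖z - w‖ ^ α * (‖z‖ ^ (-(1 + α)) + ‖w‖ ^ (-(1 + α))) := by
  have hnorm : ‖z⁻¹ - w⁻¹‖ = ‖z - w‖ / (‖z‖ * ‖w‖) := by
    rw [inv_sub_inv' hz hw, norm_mul, norm_mul, norm_inv, norm_inv, norm_sub_rev]
    field_simp
  rw [hnorm]
  exact div_mul_le_two_mul_rpow_mul_add hα0 hα1 (norm_nonneg _)
    (norm_pos_iff.2 hz) (norm_pos_iff.2 hw) (norm_sub_le z w)

lemma norm_rpow_neg_le_one_add_indicator {E : Type*} [SeminormedAddGroup E] {s : ℝ} (hs : 0 ≤ s)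
    (x : E) :
    ‖x‖ ^ (-s) ≤ 1 + (ball (0 : E) 1).indicator (fun x => ‖x‖ ^ (-s)) x := by
  by_cases hx : x ∈ ball (0 : E) 1
  · rw [indicator_of_mem hx]
    linarith
  · rw [indicator_of_notMem hx, add_zero]
    exact Real.rpow_le_one_of_one_le_of_nonpos (by simpa using hx) (by linarith)

section RieszKernel

variable {E : Type*} [NormedAddCommGroup E] [NormedSpace ℝ E] [FiniteDimensional ℝ E]
  [MeasurableSpace E] [BorelSpace E] {μ : Measure E} [μ.IsAddHaarMeasure] {s : ℝ}

lemma integrable_indicator_ball_norm_rpow_neg (hd : 1 ≤ finrank ℝ E) (hs : s < finrank ℝ E) :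
    Integrable ((ball (0 : E) 1).indicator fun x => ‖x‖ ^ (-s)) μ := by
  refine (integrableOn_ball_of_norm_le_rpow hd hs (C := 1) (ae_of_all _ fun x => ?_)
    (measurable_norm.pow_const _).aestronglyMeasurable).integrable_indicator measurableSet_ball
  rw [one_mul, Real.norm_of_nonneg (by positivity)]

lemma integrableOn_norm_sub_rpow_neg (hd : 1 ≤ finrank ℝ E) (hs0 : 0 ≤ s)
    (hs : s < finrank ℝ E) (c : E) {t : Set E} (ht : μ t ≠ ⊤) :
    IntegrableOn (fun x => ‖x - c‖ ^ (-s)) t μ := by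
  have hmajorant : IntegrableOn
      (fun x => 1 + (ball (0 : E) 1).indicator (fun x => ‖x‖ ^ (-s)) (x - c)) t μ :=
    (integrableOn_const ht).add
      ((integrable_indicator_ball_norm_rpow_neg hd hs).comp_sub_right c).integrableOn
  refine hmajorant.mono'
    ((measurable_norm.comp (measurable_sub_const c)).pow_const _).aestronglyMeasurable
    (ae_of_all _ fun x => ?_)
  rw [Real.norm_of_nonneg (by positivity)]
  exact norm_rpow_neg_le_one_add_indicator hs0 (x - c)

lemma setIntegral_ball_norm_sub_rpow_neg_le (hd : 1 ≤ finrank ℝ E) (hs0 : 0 ≤ s)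
    (hs : s < finrank ℝ E) (c : E) :
    ∫ x in ball 0 1, ‖x - c‖ ^ (-s) ∂μ ≤ μ.real (ball 0 1) + ∫ x in ball 0 1, ‖x‖ ^ (-s) ∂μ := by
  set k := (ball (0 : E) 1).indicator fun x => ‖x‖ ^ (-s)
  have hk : Integrable k μ := integrable_indicator_ball_norm_rpow_neg hd hs
  have hball : μ (ball (0 : E) 1) ≠ ⊤ := measure_ball_lt_top.ne
  calc ∫ x in ball 0 1, ‖x - c‖ ^ (-s) ∂μ ≤ ∫ x in ball 0 1, (1 + k (x - c)) ∂μ :=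
        setIntegral_mono (integrableOn_norm_sub_rpow_neg hd hs0 hs c hball)
          ((integrableOn_const hball).add (hk.comp_sub_right c).integrableOn)
          fun x => norm_rpow_neg_le_one_add_indicator hs0 (x - c)
    _ = μ.real (ball 0 1) + ∫ x in ball 0 1, k (x - c) ∂μ := by
        rw [integral_add (integrableOn_const hball : IntegrableOn (fun _ => (1 : ℝ)) _ μ)
          (hk.comp_sub_right c).integrableOn,
          setIntegral_const, smul_eq_mul, mul_one]
    _ ≤ μ.real (ball 0 1) + ∫ x, k (x - c) ∂μ :=
        add_le_add le_rfl (setIntegral_le_integral (hk.comp_sub_right c)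
          (ae_of_all _ fun x => indicator_nonneg (fun y _ => by positivity) _))
    _ = μ.real (ball 0 1) + ∫ x in ball 0 1, ‖x‖ ^ (-s) ∂μ := by
        rw [integral_sub_right_eq_self k c, integral_indicator measurableSet_ball]

end RieszKernel

section CauchyTransform

variable {g : ℂ → ℂ} {C : ℝ}

lemma integrable_div_sub (hg : AEStronglyMeasurable g) (hgC : ∀ ζ, ‖g ζ‖ ≤ C)
    (hg0 : ∀ ζ ∉ ball (0 : ℂ) 1, g ζ = 0) (c : ℂ) :
    Integrable fun ζ => g ζ / (ζ - c) := by
  have hkernel : IntegrableOn (fun ζ : ℂ => (ζ - c)⁻¹) (ball 0 1) := by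
    refine (integrableOn_norm_sub_rpow_neg (s := 1) (by simp) zero_le_one (by simp) c
      measure_ball_lt_top.ne).mono' (by fun_prop) (ae_of_all _ fun ζ => ?_)
    rw [norm_inv, Real.rpow_neg_one]
  refine IntegrableOn.integrable_of_forall_notMem_eq_zero (s := ball 0 1) ?_
    fun ζ hζ => by simp [hg0 ζ hζ]
  simp_rw [div_eq_mul_inv]
  exact hkernel.bdd_mul hg.restrict (ae_of_all _ hgC)

noncomputable def cauchyHolderConst (α : ℝ) : ℝ :=
  4 * (Real.pi + ∫ ζ in ball (0 : ℂ) 1, ‖ζ‖ ^ (-(1 + α)))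

lemma cauchyHolderConst_pos (α : ℝ) : 0 < cauchyHolderConst α := by
  have : 0 ≤ ∫ ζ in ball (0 : ℂ) 1, ‖ζ‖ ^ (-(1 + α)) := integral_nonneg fun ζ => by positivity
  unfold cauchyHolderConst
  positivity

theorem norm_integral_div_sub_sub_integral_div_sub_le {α : ℝ} (hα0 : 0 ≤ α) (hα1 : α < 1)
    (hg : AEStronglyMeasurable g) (hgC : ∀ ζ, ‖g ζ‖ ≤ C) (hg0 : ∀ ζ ∉ ball (0 : ℂ) 1, g ζ = 0)
    (c c' : ℂ) :
    ‖(∫ ζ, g ζ / (ζ - c)) - ∫ ζ, g ζ / (ζ - c')‖ ≤ C * cauchyHolderConst α * ‖c - c'‖ ^ α := by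
  set δ := ‖c - c'‖
  have hC : 0 ≤ C := (norm_nonneg _).trans (hgC 0)
  have hs0 : 0 ≤ 1 + α := by linarith
  have hs : 1 + α < finrank ℝ ℂ := by rw [Complex.finrank_real_complex]; push_cast; linarith
  have hball : volume (ball (0 : ℂ) 1) ≠ ⊤ := measure_ball_lt_top.ne
  have hvol : volume.real (ball (0 : ℂ) 1) = Real.pi := by
    simp [measureReal_def, Complex.volume_ball]
  have hkernel (b : ℂ) := integrableOn_norm_sub_rpow_neg (μ := volume) (by simp) hs0 hs b hball
  have hbound : ∀ᵐ ζ ∂volume.restrict (ball (0 : ℂ) 1),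
      ‖g ζ / (ζ - c) - g ζ / (ζ - c')‖ ≤
        C * (2 * δ ^ α * (‖ζ - c‖ ^ (-(1 + α)) + ‖ζ - c'‖ ^ (-(1 + α)))) := by
    filter_upwards [ae_restrict_of_ae (Measure.ae_ne volume c),
      ae_restrict_of_ae (Measure.ae_ne volume c')] with ζ hζc hζc'
    rw [div_eq_mul_inv, div_eq_mul_inv, ← mul_sub, norm_mul]
    refine mul_le_mul (hgC ζ) ?_ (norm_nonneg _) hC
    have h := norm_inv_sub_inv_le hα0 hα1.le (sub_ne_zero.2 hζc) (sub_ne_zero.2 hζc')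
    rwa [sub_sub_sub_cancel_left, norm_sub_rev c' c] at h
  calc ‖(∫ ζ, g ζ / (ζ - c)) - ∫ ζ, g ζ / (ζ - c')‖
      = ‖∫ ζ in ball 0 1, (g ζ / (ζ - c) - g ζ / (ζ - c'))‖ := by
        rw [← integral_sub (integrable_div_sub hg hgC hg0 c) (integrable_div_sub hg hgC hg0 c'),
          setIntegral_eq_integral_of_forall_compl_eq_zero fun ζ hζ => by simp [hg0 ζ hζ]]
    _ ≤ ∫ ζ in ball 0 1, C * (2 * δ ^ α * (‖ζ - c‖ ^ (-(1 + α)) + ‖ζ - c'‖ ^ (-(1 + α)))) :=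
        norm_integral_le_of_norm_le (((hkernel c).add (hkernel c')).const_mul _ |>.const_mul _)
          hbound
    _ = C * (2 * δ ^ α) * ((∫ ζ in ball 0 1, ‖ζ - c‖ ^ (-(1 + α))) +
          ∫ ζ in ball 0 1, ‖ζ - c'‖ ^ (-(1 + α))) := by
        rw [integral_const_mul, integral_const_mul, integral_add (hkernel c) (hkernel c')]
        ring
    _ ≤ C * (2 * δ ^ α) * ((Real.pi + ∫ ζ in ball (0 : ℂ) 1, ‖ζ‖ ^ (-(1 + α))) +
          (Real.pi + ∫ ζ in ball (0 : ℂ) 1, ‖ζ‖ ^ (-(1 + α)))) := by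
        rw [← hvol]
        gcongr <;> exact setIntegral_ball_norm_sub_rpow_neg_le (by simp) hs0 hs _
    _ = C * cauchyHolderConst α * δ ^ α := by
        rw [cauchyHolderConst]
        ring

end CauchyTransform

/-- Let `p > 2` and `α = 1 - 2/p ∈ (0,1)`. For `C₅ > 0` there is a Hölder
constant `H > 0` depending only on `C₅` and `p` such that for every measurable
`Φ : ℂ × ℂ → ℂ` bounded by `C₅` and vanishing when `|c| ≥ 1`, and every bounded
continuous `f : ℂ → ℂ`, `|𝒦f(c) - 𝒦f(c')| ≤ H |c - c'|^α` for all `c, c' ∈ ℂ`. -/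
theorem KOp_holder
    (p : ℝ) (hp : 2 < p) (C₅ : ℝ) (hC₅ : 0 < C₅) :
    ∃ H : ℝ, 0 < H ∧
      ∀ Φ : ℂ → ℂ → ℂ, Measurable (Function.uncurry Φ) →
        (∀ c w : ℂ, ‖Φ c w‖ ≤ C₅) →
        (∀ c w : ℂ, 1 ≤ ‖c‖ → Φ c w = 0) →
        ∀ f : ℂ → ℂ, Continuous f → (∃ M : ℝ, ∀ c : ℂ, ‖f c‖ ≤ M) →
          ∀ c c' : ℂ, ‖KOp Φ f c - KOp Φ f c'‖ ≤ H * ‖c - c'‖ ^ (1 - 2 / p) := by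
  have hα0 : 0 ≤ 1 - 2 / p := by
    rw [sub_nonneg, div_le_one (by linarith)]; linarith
  have hα1 : 1 - 2 / p < 1 := by
    have : 0 < 2 / p := by positivity
    linarith
  refine ⟨Real.pi⁻¹ * C₅ * cauchyHolderConst (1 - 2 / p),
    mul_pos (mul_pos (inv_pos.2 Real.pi_pos) hC₅) (cauchyHolderConst_pos _), ?_⟩
  intro Φ hΦ hΦC hΦ0 f hf _ c c'
  have hg : Measurable fun ζ => Φ ζ (f ζ) := hΦ.comp (measurable_id.prodMk hf.measurable)
  have hg0 : ∀ ζ ∉ ball (0 : ℂ) 1, Φ ζ (f ζ) = 0 := fun ζ hζ => hΦ0 ζ _ (by simpa using hζ)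
  calc ‖KOp Φ f c - KOp Φ f c'‖
      = Real.pi⁻¹ * ‖(∫ ζ, Φ ζ (f ζ) / (ζ - c)) - ∫ ζ, Φ ζ (f ζ) / (ζ - c')‖ := by
        rw [KOp, KOp, ← smul_sub, norm_smul, norm_neg, norm_inv, Real.norm_of_nonneg Real.pi_pos.le]
    _ ≤ Real.pi⁻¹ * (C₅ * cauchyHolderConst (1 - 2 / p) * ‖c - c'‖ ^ (1 - 2 / p)) := by
        gcongr
        exact norm_integral_div_sub_sub_integral_div_sub_le hα0 hα1 hg.aestronglyMeasurable
          (fun ζ => hΦC ζ _) hg0 c c'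
    _ = _ := by ring
end

section
/- Let ε ≥ 0 and 0 < r < 1, and let s : [0, r] → ℝ be differentiable with 0 < s(t) < 1 for all t ∈ [0, r] and satisfying the differential inequality s′(t) ≤ ((2 + ε)/(1 − t²)) · s(t) · log(1/s(t)) for all t ∈ [0, r]. Then s(t) ≤ s(0)^{((1 − t)/(1 + t))^{1 + ε/2}} for all t ∈ [0, r]. -/
/-!
Put `L = log (1 / s) > 0`. The differential inequality says exactly that
`(log L)' ≥ -(2 + ε) / (1 - t²) = -(2 + ε) · artanh'`, so `log L + (2 + ε) · artanh` is monotone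
on `[0, r]`. Comparing `t` with `0` and exponentiating gives
`L t ≥ L 0 · exp (-(2 + ε) · artanh t) = L 0 · ((1 - t) / (1 + t)) ^ (1 + ε / 2)`,
which is the claim after exponentiating once more.
-/

open Set

namespace Real

theorem hasDerivAt_artanh {x : ℝ} (hx : x ∈ Ioo (-1) 1) :
    HasDerivAt artanh (1 / (1 - x ^ 2)) x := by
  have h1 : 0 < 1 + x := by linarith [hx.1]
  have h2 : 0 < 1 - x := by linarith [hx.2]
  have hlog : HasDerivAt (fun y => 1 / 2 * (log (1 + y) - log (1 - y)))
      (1 / 2 * (1 / (1 + x) - (-1) / (1 - x))) x := by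
    have hp := ((hasDerivAt_id x).const_add 1).log h1.ne'
    have hm := ((hasDerivAt_id x).const_sub 1).log h2.ne'
    simpa using (hp.sub hm).const_mul (1 / 2 : ℝ)
  have hartanh : artanh =ᶠ[nhds x] fun y => 1 / 2 * (log (1 + y) - log (1 - y)) := by
    filter_upwards [Ioo_mem_nhds hx.1 hx.2] with y hy
    rw [artanh_eq_half_log (Ioo_subset_Icc_self hy),
      log_div (by linarith [hy.1]) (by linarith [hy.2])]
  refine (hlog.congr_of_eventuallyEq hartanh).congr_deriv ?_
  rw [show 1 - x ^ 2 = (1 - x) * (1 + x) by ring]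
  field_simp
  ring

theorem one_sub_div_one_add_rpow {x : ℝ} (hx : x ∈ Ioo (-1) 1) (a : ℝ) :
    ((1 - x) / (1 + x)) ^ a = exp (-(2 * a * artanh x)) := by
  have h1 : 0 < 1 + x := by linarith [hx.1]
  have h2 : 0 < 1 - x := by linarith [hx.2]
  rw [rpow_def_of_pos (div_pos h2 h1), artanh_eq_half_log (Ioo_subset_Icc_self hx),
    log_div h2.ne' h1.ne', log_div h1.ne' h2.ne']
  ring_nf

end Real

open Real

theorem HasDerivAt.log_log_one_div {s : ℝ → ℝ} {s' x : ℝ} (hs : HasDerivAt s s' x)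
    (hpos : 0 < s x) (hlt1 : s x < 1) :
    HasDerivAt (fun y => Real.log (Real.log (1 / s y)))
      (-(s' / (s x * Real.log (1 / s x)))) x := by
  have hL : Real.log (1 / s x) ≠ 0 := (log_pos (one_lt_one_div hpos hlt1)).ne'
  have hinner : HasDerivAt (fun y => Real.log (1 / s y)) (-(s' / s x)) x := by
    have hneg : HasDerivAt (fun y => -Real.log (s y)) (-(s' / s x)) x := (hs.log hpos.ne').neg
    simpa [one_div, log_inv] using hneg
  refine (hinner.log hL).congr_deriv ?_
  field_simp

theorem monotoneOn_log_log_one_div_add_mul_artanh {s s' : ℝ → ℝ} {κ : ℝ} {D : Set ℝ}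
    (hD : Convex ℝ D) (hD1 : D ⊆ Ioo (-1) 1)
    (hderiv : ∀ t ∈ D, HasDerivAt s (s' t) t)
    (hpos : ∀ t ∈ D, 0 < s t) (hlt1 : ∀ t ∈ D, s t < 1)
    (hineq : ∀ t ∈ D, s' t ≤ κ / (1 - t ^ 2) * (s t * log (1 / s t))) :
    MonotoneOn (fun t => log (log (1 / s t)) + κ * artanh t) D := by
  have hF : ∀ t ∈ D, HasDerivAt (fun t => log (log (1 / s t)) + κ * artanh t)
      (-(s' t / (s t * log (1 / s t))) + κ * (1 / (1 - t ^ 2))) t := fun t ht =>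
    ((hderiv t ht).log_log_one_div (hpos t ht) (hlt1 t ht)).add
      ((hasDerivAt_artanh (hD1 ht)).const_mul κ)
  refine monotoneOn_of_hasDerivWithinAt_nonneg hD
    (fun t ht => (hF t ht).continuousAt.continuousWithinAt)
    (fun t ht => (hF t (interior_subset ht)).hasDerivWithinAt) fun t ht => ?_
  have ht := interior_subset ht
  have hsL : 0 < s t * log (1 / s t) :=
    mul_pos (hpos t ht) (log_pos (one_lt_one_div (hpos t ht) (hlt1 t ht)))
  have hquot : s' t / (s t * log (1 / s t)) ≤ κ / (1 - t ^ 2) :=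
    (div_le_iff₀ hsL).2 (hineq t ht)
  rw [mul_one_div]
  linarith

theorem le_rpow_exp_neg_of_log_log_one_div_sub_le {u v x : ℝ} (hu0 : 0 < u) (hu1 : u < 1)
    (hv0 : 0 < v) (hv1 : v < 1) (h : log (log (1 / u)) - x ≤ log (log (1 / v))) :
    v ≤ u ^ exp (-x) := by
  have hLu : 0 < log (1 / u) := log_pos (one_lt_one_div hu0 hu1)
  have hLv : 0 < log (1 / v) := log_pos (one_lt_one_div hv0 hv1)
  have hL : log (1 / u) * exp (-x) ≤ log (1 / v) := by
    rw [← exp_log hLu, ← exp_add, ← sub_eq_add_neg, ← le_log_iff_exp_le hLv]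
    exact h
  rw [← log_le_log_iff hv0 (rpow_pos_of_pos hu0 _), log_rpow hu0]
  rw [one_div, log_inv, one_div, log_inv] at hL
  linarith

theorem differential_inequality_comparison_general
    (ε r : ℝ) (hr1 : r < 1)
    (s s' : ℝ → ℝ)
    (hderiv : ∀ t ∈ Set.Icc (0 : ℝ) r, HasDerivAt s (s' t) t)
    (hpos : ∀ t ∈ Set.Icc (0 : ℝ) r, 0 < s t)
    (hlt1 : ∀ t ∈ Set.Icc (0 : ℝ) r, s t < 1)
    (hineq : ∀ t ∈ Set.Icc (0 : ℝ) r,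
      s' t ≤ (2 + ε) / (1 - t ^ 2) * (s t * Real.log (1 / s t))) :
    ∀ t ∈ Set.Icc (0 : ℝ) r,
      s t ≤ s 0 ^ (((1 - t) / (1 + t)) ^ (1 + ε / 2)) := by
  intro t ht
  have hD : Icc 0 r ⊆ Ioo (-1) 1 := fun x hx => ⟨by linarith [hx.1], by linarith [hx.2]⟩
  have h0 : (0 : ℝ) ∈ Icc 0 r := ⟨le_rfl, ht.1.trans ht.2⟩
  have hmono := monotoneOn_log_log_one_div_add_mul_artanh (convex_Icc 0 r) hD hderiv hpos hlt1
    hineq h0 ht ht.1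
  simp only [artanh_zero, mul_zero, add_zero] at hmono
  have hexponent : ((1 - t) / (1 + t)) ^ (1 + ε / 2) = exp (-((2 + ε) * artanh t)) := by
    rw [one_sub_div_one_add_rpow (hD ht)]
    ring_nf
  rw [hexponent]
  exact le_rpow_exp_neg_of_log_log_one_div_sub_le (hpos 0 h0) (hlt1 0 h0) (hpos t ht)
    (hlt1 t ht) (by linarith)

/-- Differential-inequality comparison. Let `ε ≥ 0`, `0 < r < 1`, and let
`s` be differentiable on `[0, r]` with `0 < s(t) < 1` there and
`s'(t) ≤ ((2 + ε)/(1 - t²)) s(t) log(1/s(t))`. Then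
`s(t) ≤ s(0) ^ (((1 - t)/(1 + t))^(1 + ε/2))` for all `t ∈ [0, r]`. -/
theorem differential_inequality_comparison
    (ε r : ℝ) (hε : 0 ≤ ε) (hr0 : 0 < r) (hr1 : r < 1)
    (s s' : ℝ → ℝ)
    (hderiv : ∀ t ∈ Set.Icc (0 : ℝ) r, HasDerivAt s (s' t) t)
    (hpos : ∀ t ∈ Set.Icc (0 : ℝ) r, 0 < s t)
    (hlt1 : ∀ t ∈ Set.Icc (0 : ℝ) r, s t < 1)
    (hineq : ∀ t ∈ Set.Icc (0 : ℝ) r,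
      s' t ≤ (2 + ε) / (1 - t ^ 2) * (s t * Real.log (1 / s t))) :
    ∀ t ∈ Set.Icc (0 : ℝ) r,
      s t ≤ s 0 ^ (((1 - t) / (1 + t)) ^ (1 + ε / 2)) :=
  differential_inequality_comparison_general ε r hr1 s s' hderiv hpos hlt1 hineq
end

section
/- If τ ≥ 1/rⁿ, then for every w ∈ ℂ with Re w ≥ τ one has |w^{−1/n}| ≤ r, so F(w) is defined, and Re F(w) ≥ Re w + 1/2. In particular F maps R_τ into R_τ. -/
/-- The map `F(w) = w + 1 + η(w^{-1/n})`, where `w^{-1/n} = exp(-(Log w)/n)` is taken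
with the principal branch of the logarithm. -/
noncomputable def fatouF (n : ℕ) (η : ℂ → ℂ) (w : ℂ) : ℂ :=
  w + 1 + η (Complex.exp (-(Complex.log w) / (n : ℂ)))

/-!
For `Re w ≥ τ ≥ r⁻ⁿ` we have `|w| ≥ r⁻ⁿ`, and `|w^{-1/n}| = |w|^{-1/n}` only depends on `|w|`,
so `|w^{-1/n}| ≤ r`. Then `|η(w^{-1/n})| ≤ 1/2`, so the perturbation `η` can lower the real
part of the translation `w ↦ w + 1` by at most `1/2`.
-/

namespace Complex

lemma norm_exp_neg_log_div_natCast (w : ℂ) (n : ℕ) :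
    ‖exp (-log w / n)‖ = Real.exp (-Real.log ‖w‖ / n) := by
  rw [norm_exp, div_natCast_re, neg_re, log_re]

lemma norm_exp_neg_log_div_natCast_le {w : ℂ} {n : ℕ} {r : ℝ} (hn : n ≠ 0) (hr : 0 < r)
    (hw : 1 / r ^ n ≤ ‖w‖) : ‖exp (-log w / n)‖ ≤ r := by
  have hn' : (0 : ℝ) < n := by positivity
  have hlog : -(n * Real.log r) ≤ Real.log ‖w‖ := by
    rw [← Real.log_pow, ← Real.log_inv, ← one_div]
    exact Real.log_le_log (by positivity) hw
  rw [norm_exp_neg_log_div_natCast, ← Real.exp_log hr, Real.exp_le_exp, div_le_iff₀ hn']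
  linarith

lemma re_add_half_le_re_add_one_add {z e : ℂ} (he : ‖e‖ ≤ 1 / 2) :
    z.re + 1 / 2 ≤ (z + 1 + e).re := by
  have he_re : -(1 / 2) ≤ e.re := (abs_le.1 ((abs_re_le_norm e).trans he)).1
  simp only [add_re, one_re]
  linarith

end Complex

theorem fatouF_maps_halfPlane_general
    (n : ℕ) (hn : 1 ≤ n) (r : ℝ) (hr0 : 0 < r)
    (η : ℂ → ℂ)
    (hηbdd : ∀ ξ : ℂ, ‖ξ‖ ≤ r → ‖η ξ‖ ≤ 1 / 2)
    (τ : ℝ) (hτ : 1 / r ^ n ≤ τ) :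
    (∀ w : ℂ, τ ≤ w.re →
      ‖Complex.exp (-(Complex.log w) / (n : ℂ))‖ ≤ r ∧
      w.re + 1 / 2 ≤ (fatouF n η w).re) ∧
    Set.MapsTo (fatouF n η) {w : ℂ | τ < w.re} {w : ℂ | τ < w.re} := by
  have key : ∀ w : ℂ, τ ≤ w.re →
      ‖Complex.exp (-Complex.log w / n)‖ ≤ r ∧ w.re + 1 / 2 ≤ (fatouF n η w).re := by
    intro w hw
    have hξ : ‖Complex.exp (-Complex.log w / n)‖ ≤ r :=
      Complex.norm_exp_neg_log_div_natCast_le (by omega) hr0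
        (hτ.trans (hw.trans (Complex.re_le_norm w)))
    exact ⟨hξ, Complex.re_add_half_le_re_add_one_add (hηbdd _ hξ)⟩
  refine ⟨key, fun w (hw : τ < w.re) => ?_⟩
  have := (key w hw.le).2
  show τ < (fatouF n η w).re
  linarith

/-- with `n ≥ 1`, `0 < r < 1`, `η(0) = 0` and `|η(ξ)| ≤ 1/2` for
`|ξ| ≤ r`: if `τ ≥ 1/rⁿ`, then for every `w` with `Re w ≥ τ` one has `|w^{-1/n}| ≤ r`
(so `F(w)` is defined) and `Re F(w) ≥ Re w + 1/2`; in particular `F` maps the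
half-plane `R_τ` into itself. -/
theorem fatouF_maps_halfPlane
    (n : ℕ) (hn : 1 ≤ n) (r : ℝ) (hr0 : 0 < r) (hr1 : r < 1)
    (η : ℂ → ℂ)
    (hη0 : η 0 = 0)
    (hηbdd : ∀ ξ : ℂ, ‖ξ‖ ≤ r → ‖η ξ‖ ≤ 1 / 2)
    (τ : ℝ) (hτ : 1 / r ^ n ≤ τ) :
    (∀ w : ℂ, τ ≤ w.re →
      ‖Complex.exp (-(Complex.log w) / (n : ℂ))‖ ≤ r ∧
      w.re + 1 / 2 ≤ (fatouF n η w).re) ∧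
    Set.MapsTo (fatouF n η) {w : ℂ | τ < w.re} {w : ℂ | τ < w.re} :=
  fatouF_maps_halfPlane_general n hn r hr0 η hηbdd τ hτ
end
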